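/- (Grün's lemma.) If P is a perfect group, then the central quotient P/Z(P) is centerless, i.e., Z(P/Z(P)) is trivial. -/

import Mathlib

/-- Grün's lemma: if P is perfect, then P/Z(P) is centerless. -/
theorem stmt_8 (P : Type*) [Group P] (hperf : commutator P = ⊤) :
    Subgroup.center (P ⧸ Subgroup.center P) = ⊥ :=
  have : Group.IsPerfect P := ⟨hperf⟩
  Group.IsPerfect.center_quotient_center_eq_bot P
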